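/- arXiv:math/0208249 — 2 statements merged into one kernel-verified Lean document; each statement's English description precedes it below -/
import Mathlib

section
/- Let A be a unital Banach algebra and a ∈ A. Define R(g, a) = (αe − βa)^{-1} for g with g = [[α, β̄],[β, ᾱ]], whenever this inverse exists. Then the cocycle identity R(g₁, a) · R(g₂, g₁^{-1}·a) = R(g₁g₂, a) holds whenever all terms are defined. -/
open Complex

/-- The resolvent R(g, a) = (αe − βa)⁻¹ for g = [[α, β̄],[β, ᾱ]]. -/
noncomputable def resolventR {A : Type*} [NormedRing A] [NormedAlgebra ℂ A]
    (α β : ℂ) (a : A) : A :=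
  Ring.inverse (α • (1 : A) - β • a)

/-- The Möbius action g⁻¹·a = (ᾱa − β̄e)(αe − βa)⁻¹. -/
noncomputable def moebiusInvAct {A : Type*} [NormedRing A] [NormedAlgebra ℂ A]
    (α β : ℂ) (a : A) : A :=
  ((starRingEnd ℂ) α • a - (starRingEnd ℂ) β • (1 : A)) *
    Ring.inverse (α • (1 : A) - β • a)

/-- The cocycle identity R(g₁, a) · R(g₂, g₁⁻¹·a) = R(g₁g₂, a), whenever all
terms are defined.  Here g₁g₂ has parameters
(α₁α₂ + β̄₁β₂, β₁α₂ + ᾱ₁β₂) for gᵢ = [[αᵢ, β̄ᵢ],[βᵢ, ᾱᵢ]]. -/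
theorem resolvent_cocycle {A : Type*} [NormedRing A] [NormedAlgebra ℂ A]
    [CompleteSpace A] (a : A) (α₁ β₁ α₂ β₂ : ℂ)
    (h₁ : ‖α₁‖ ^ 2 - ‖β₁‖ ^ 2 = 1)
    (h₂ : ‖α₂‖ ^ 2 - ‖β₂‖ ^ 2 = 1)
    (hu₁ : IsUnit (α₁ • (1 : A) - β₁ • a))
    (hu₂ : IsUnit (α₂ • (1 : A) - β₂ • moebiusInvAct α₁ β₁ a))
    (hu₃ : IsUnit ((α₁ * α₂ + (starRingEnd ℂ) β₁ * β₂) • (1 : A) -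
      (β₁ * α₂ + (starRingEnd ℂ) α₁ * β₂) • a)) :
    resolventR α₁ β₁ a * resolventR α₂ β₂ (moebiusInvAct α₁ β₁ a) =
      resolventR (α₁ * α₂ + (starRingEnd ℂ) β₁ * β₂)
        (β₁ * α₂ + (starRingEnd ℂ) α₁ * β₂) a := by
  set u : A := α₁ • (1 : A) - β₁ • a with hu
  have hbu : moebiusInvAct α₁ β₁ a * u =
      (starRingEnd ℂ) α₁ • a - (starRingEnd ℂ) β₁ • (1 : A) := by
    rw [moebiusInvAct, mul_assoc, Ring.inverse_mul_cancel _ hu₁, mul_one]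
  have key : (α₂ • (1 : A) - β₂ • moebiusInvAct α₁ β₁ a) * u =
      (α₁ * α₂ + (starRingEnd ℂ) β₁ * β₂) • (1 : A) -
        (β₁ * α₂ + (starRingEnd ℂ) α₁ * β₂) • a := by
    rw [sub_mul, smul_mul_assoc, smul_mul_assoc, one_mul, hbu, hu]
    rw [smul_sub, smul_sub, smul_smul, smul_smul, smul_smul, smul_smul,
      add_smul, add_smul]
    ring_nf
    abel
  set v : A := α₂ • (1 : A) - β₂ • moebiusInvAct α₁ β₁ a with hv
  have hvu : IsUnit (v * u) := hu₂.mul hu₁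
  have h1 : (Ring.inverse u * Ring.inverse v) * (v * u) = 1 := by
    rw [mul_assoc, ← mul_assoc (Ring.inverse v), Ring.inverse_mul_cancel _ hu₂,
      one_mul, Ring.inverse_mul_cancel _ hu₁]
  have hmain : Ring.inverse u * Ring.inverse v = Ring.inverse (v * u) := by
    calc Ring.inverse u * Ring.inverse v
        = (Ring.inverse u * Ring.inverse v) * ((v * u) * Ring.inverse (v * u)) := by
          rw [Ring.mul_inverse_cancel _ hvu, mul_one]
      _ = Ring.inverse (v * u) := by rw [← mul_assoc, h1, one_mul]
  show Ring.inverse u * Ring.inverse v = _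
  rw [hmain, key]; rfl
end

section
/- Let φ be holomorphic near λ and let d = deg_λ φ be the order of the zero of φ(z) − φ(λ) at z = λ (assumed finite, d ≥ 1). Then for the Jordan block a = J_k(λ) of size k, the matrix φ(a) (defined by the Taylor series of φ at λ applied to the nilpotent part) has (φ(a) − φ(λ)I)^{⌈k/d⌉} = 0 and (φ(a) − φ(λ)I)^{⌈k/d⌉ − 1} ≠ 0; i.e., the nilpotency index of φ(a) − φ(λ)I equals ⌈k/d⌉. -/
open Matrix

/-- The k×k nilpotent Jordan block: ones on the superdiagonal. -/
def jordanBlock0 (k : ℕ) : Matrix (Fin k) (Fin k) ℂ :=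
  Matrix.of fun i j => if (i : ℕ) + 1 = (j : ℕ) then 1 else 0

lemma jordanBlock0_pow (k t : ℕ) :
    (jordanBlock0 k) ^ t =
      Matrix.of fun (i j : Fin k) => if (i : ℕ) + t = (j : ℕ) then (1 : ℂ) else 0 := by
  induction t with
  | zero =>
    ext i j
    simp [Matrix.one_apply, Fin.ext_iff]
  | succ t ih =>
    rw [pow_succ, ih]
    ext i j
    simp only [Matrix.mul_apply, Matrix.of_apply, jordanBlock0, ite_mul, one_mul, zero_mul]
    by_cases h : (i : ℕ) + t < k
    · rw [Finset.sum_eq_single (⟨(i : ℕ) + t, h⟩ : Fin k)]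
      · simp [Nat.add_assoc]
      · intro b _ hb
        rw [if_neg]
        intro hb'
        exact hb (by simp [Fin.ext_iff, ← hb'])
      · simp
    · have h1 : ∀ x : Fin k, ¬((i : ℕ) + t = (x : ℕ)) := fun x hx => h (hx ▸ x.isLt)
      have h2 : ¬((i : ℕ) + (t + 1) = (j : ℕ)) := by
        have := j.isLt; omega
      simp [h1, h2]

lemma jordanBlock0_pow_eq_zero {k t : ℕ} (h : k ≤ t) : (jordanBlock0 k) ^ t = 0 := by
  rw [jordanBlock0_pow]
  ext i j
  have hj := j.isLt
  have : ¬((i : ℕ) + t = (j : ℕ)) := by omega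
  simp [this]

lemma jordanBlock0_pow_ne_zero {k t : ℕ} (h : t < k) : (jordanBlock0 k) ^ t ≠ 0 := by
  intro hz
  have := congrFun (congrFun hz ⟨0, lt_of_le_of_lt (Nat.zero_le t) h⟩) ⟨t, h⟩
  rw [jordanBlock0_pow] at this
  simp at this

/-- Spectral mapping on jets: if φ is holomorphic near λ with
deg_λ φ = d (first non-vanishing derivative of φ at λ of order ≥ 1 is the
d-th), then for the Jordan block a = J_k(λ) = λI + N, the matrix
φ(a) = Σ_{j<k} φ⁽ʲ⁾(λ)/j! · Nʲ satisfies: the nilpotency index of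
φ(a) − φ(λ)I equals ⌈k/d⌉ (written (k + d − 1)/d in natural number division). -/
theorem jet_spectral_mapping (k d : ℕ) (hk : 0 < k) (hd : 1 ≤ d)
    (lam : ℂ) (φ : ℂ → ℂ) (hφ : AnalyticAt ℂ φ lam)
    (hdeg : iteratedDeriv d φ lam ≠ 0)
    (hlow : ∀ j, 1 ≤ j → j < d → iteratedDeriv j φ lam = 0) :
    let N := jordanBlock0 k
    let φa : Matrix (Fin k) (Fin k) ℂ :=
      ∑ j ∈ Finset.range k, (iteratedDeriv j φ lam / (j.factorial : ℂ)) • N ^ j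
    let c : ℕ := (k + d - 1) / d   -- ⌈k / d⌉
    (φa - φ lam • (1 : Matrix (Fin k) (Fin k) ℂ)) ^ c = 0 ∧
    (φa - φ lam • (1 : Matrix (Fin k) (Fin k) ℂ)) ^ (c - 1) ≠ 0 := by
  intro N φa c
  have hcd : c = (k + d - 1) / d := rfl
  set coef : ℕ → ℂ := fun j => iteratedDeriv j φ lam / (j.factorial : ℂ) with hcoef
  have hcoef0 : coef 0 = φ lam := by simp [hcoef, iteratedDeriv_zero]
  have hcoeflow : ∀ j, 1 ≤ j → j < d → coef j = 0 := by
    intro j h1 h2; simp [hcoef, hlow j h1 h2]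
  have hcoefd : coef d ≠ 0 := by
    simp only [hcoef, div_ne_zero_iff]
    exact ⟨hdeg, Nat.cast_ne_zero.mpr (Nat.factorial_ne_zero d)⟩
  -- rewrite φa - φ(λ)•1 as a sum over Ico d k
  have hM : φa - φ lam • (1 : Matrix (Fin k) (Fin k) ℂ) =
      ∑ j ∈ Finset.Ico d k, coef j • N ^ j := by
    have hsub : insert 0 (Finset.Ico d k) ⊆ Finset.range k := by
      intro x hx
      simp only [Finset.mem_insert, Finset.mem_Ico] at hx
      rcases hx with rfl | ⟨_, h2⟩
      · exact Finset.mem_range.mpr hk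
      · exact Finset.mem_range.mpr h2
    have h0 : (0 : ℕ) ∉ Finset.Ico d k := by simp; omega
    have hsum : φa = ∑ j ∈ insert 0 (Finset.Ico d k), coef j • N ^ j := by
      refine (Finset.sum_subset hsub ?_).symm
      intro x hx hx'
      simp only [Finset.mem_insert, Finset.mem_Ico, not_or, not_and, not_le] at hx'
      have h1 : 1 ≤ x := Nat.one_le_iff_ne_zero.mpr hx'.1
      have hxk : x < k := Finset.mem_range.mp hx
      have hxd : x < d := by
        by_contra hc
        exact (hx'.2 (le_of_not_gt hc)) hxk
      show coef x • N ^ x = 0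
      rw [hcoeflow x h1 hxd, zero_smul]
    rw [hsum, Finset.sum_insert h0, hcoef0, pow_zero]
    abel
  -- arithmetic facts about c
  have hA : c * d ≤ k + d - 1 := by rw [hcd]; exact Nat.div_mul_le_self _ _
  have hB2 : k + d - 1 < c * d + d := by
    have h1 : (k + d - 1) / d < c + 1 := by omega
    have h2 : k + d - 1 < (c + 1) * d := (Nat.div_lt_iff_lt_mul hd).mp h1
    calc k + d - 1 < (c + 1) * d := h2
    _ = c * d + d := by ring
  have key : k ≤ c * d ∧ c * d - d < k := by
    have hk' := hk
    generalize c * d = x at hA hB2 ⊢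
    omega
  have hdc : k ≤ d * c := by rw [mul_comm]; exact key.1
  have hsubm : (c - 1) * d = c * d - d := by rw [Nat.sub_mul, one_mul]
  have hlt : d * (c - 1) < k := by rw [mul_comm, hsubm]; exact key.2
  -- Case split on d vs k
  rcases le_or_gt k d with hkd | hdk
  · -- d ≥ k : the sum is empty, M = 0, c = 1
    have hIco : Finset.Ico d k = ∅ := Finset.Ico_eq_empty (by omega)
    have hM0 : φa - φ lam • (1 : Matrix (Fin k) (Fin k) ℂ) = 0 := by
      rw [hM, hIco, Finset.sum_empty]
    have hc1 : c = 1 := by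
      rw [hcd]
      apply Nat.div_eq_of_lt_le <;> omega
    rw [hc1, hM0]
    constructor
    · simp
    · simp only [Nat.sub_self, pow_zero]
      intro h
      have := congrFun (congrFun h ⟨0, hk⟩) ⟨0, hk⟩
      simp [Matrix.one_apply] at this
  · -- d < k : factor as N^d * B with B a unit
    set B : Matrix (Fin k) (Fin k) ℂ :=
      ∑ i ∈ Finset.range (k - d), coef (d + i) • N ^ i with hBdef
    have hMB : φa - φ lam • (1 : Matrix (Fin k) (Fin k) ℂ) = N ^ d * B := by
      rw [hM, Finset.sum_Ico_eq_sum_range, hBdef, Finset.mul_sum]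
      refine Finset.sum_congr rfl fun i _ => ?_
      rw [mul_smul_comm, pow_add]
    have hcomm : Commute (N ^ d) B := by
      refine Commute.sum_right _ _ _ fun i _ => ?_
      exact ((Commute.refl N).pow_pow d i).smul_right _
    have hBunit : IsUnit B := by
      obtain ⟨m, hm⟩ : ∃ m, k - d = m + 1 := ⟨k - d - 1, by omega⟩
      rw [hBdef, hm, Finset.sum_range_succ']
      simp only [pow_zero, Nat.add_zero]
      refine IsNilpotent.isUnit_add_right_of_commute ?_ ?_ ?_
      · refine Commute.isNilpotent_sum (fun i _ => ?_) (fun i j _ _ => ?_)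
        · refine IsNilpotent.smul ⟨k, ?_⟩ _
          rw [← pow_mul]
          exact jordanBlock0_pow_eq_zero (Nat.le_mul_of_pos_left k (Nat.succ_pos i))
        · exact ((((Commute.refl N).pow_pow _ _).smul_right _).smul_left _)
      · refine ⟨⟨coef d • 1, (coef d)⁻¹ • (1 : Matrix (Fin k) (Fin k) ℂ), ?_, ?_⟩, rfl⟩
        · rw [smul_mul_assoc, one_mul, smul_smul, mul_inv_cancel₀ hcoefd, one_smul]
        · rw [smul_mul_assoc, one_mul, smul_smul, inv_mul_cancel₀ hcoefd, one_smul]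
      · refine Commute.sum_left _ _ _ fun i _ => ?_
        exact (Commute.one_right _).smul_right _
    have hpow : ∀ m : ℕ, (φa - φ lam • (1 : Matrix (Fin k) (Fin k) ℂ)) ^ m
        = N ^ (d * m) * B ^ m := by
      intro m
      rw [hMB, hcomm.mul_pow, pow_mul]
    constructor
    · rw [hpow, jordanBlock0_pow_eq_zero hdc, zero_mul]
    · rw [hpow]
      intro h
      obtain ⟨u, hu⟩ := hBunit.pow (c - 1)
      rw [← hu] at h
      have h0 : (N ^ (d * (c - 1))) = 0 := by
        calc N ^ (d * (c - 1)) = N ^ (d * (c - 1)) * ↑u * ↑u⁻¹ := by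
              rw [mul_assoc, Units.mul_inv, mul_one]
        _ = 0 := by rw [h, zero_mul]
      exact jordanBlock0_pow_ne_zero hlt h0
end
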